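/- Fix x̄ ∈ (0, 1/2) and define l(p̂) = (1 − 2p̂) / [ (p̂ * x̄)(1 − p̂ * x̄) · log((1 − p̂ * x̄)/(p̂ * x̄)) ] for p̂ ∈ [0, 1/2). Then l is convex on [0, 1/2). -/

import Mathlib

/-!
Write `q = p̂ * x̄ = x̄ + (1 - 2x̄) p̂`, affine in `p̂`, and `L = ln ((1 - q) / q) > 0`.
Since `sinh L = (1 - 2q) / (2q(1 - q))`, one gets `l(p̂) = (2 ln 2 / (1 - 2x̄)) · sinh L / L`.
Now `t ↦ sinh t / t` is increasing and convex on `(0, ∞)`: its first and second derivatives have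
the signs of `t cosh t - sinh t` and `(1 + t²/2) sinh t - t cosh t`, both nonnegative as they
vanish at `0` and have nonnegative derivatives. And `q ↦ ln ((1 - q) / q)` is convex on `(0, 1/2)`,
with second derivative `(1 - 2q) / (q(1 - q))²`.
-/

/-- The star operation `p * x = p(1−x) + (1−p)x`. -/
noncomputable def pstar (p x : ℝ) : ℝ := p * (1 - x) + (1 - p) * x

/-- `l(p̂) = (1 − 2p̂) / [ (p̂ * x̄)(1 − p̂ * x̄) · log₂((1 − p̂ * x̄)/(p̂ * x̄)) ]`. -/
noncomputable def lfun (xb ph : ℝ) : ℝ :=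
  (1 - 2 * ph) /
    (pstar ph xb * (1 - pstar ph xb) * Real.logb 2 ((1 - pstar ph xb) / pstar ph xb))


open Real Set

theorem ConvexOn.comp_of_mapsTo {𝕜 E β α : Type*} [Semiring 𝕜] [PartialOrder 𝕜]
    [AddCommMonoid E] [AddCommMonoid β] [PartialOrder β] [AddCommMonoid α] [PartialOrder α]
    [SMul 𝕜 E] [SMul 𝕜 β] [SMul 𝕜 α] {s : Set E} {t : Set β} {f : E → β} {g : β → α}
    (hg : ConvexOn 𝕜 t g) (hf : ConvexOn 𝕜 s f) (hg' : MonotoneOn g t) (hst : MapsTo f s t) :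
    ConvexOn 𝕜 s (g ∘ f) :=
  ⟨hf.1, fun _ hx _ hy _ _ ha hb hab =>
    (hg' (hst (hf.1 hx hy ha hb hab)) (hg.1 (hst hx) (hst hy) ha hb hab)
      (hf.2 hx hy ha hb hab)).trans (hg.2 (hst hx) (hst hy) ha hb hab)⟩

namespace Real

theorem hasDerivAt_mul_cosh_sub_sinh (x : ℝ) :
    HasDerivAt (fun x => x * cosh x - sinh x) (x * sinh x) x :=
  (((hasDerivAt_id' x).mul (hasDerivAt_cosh x)).sub (hasDerivAt_sinh x)).congr_deriv (by ring)

theorem sinh_le_mul_cosh {x : ℝ} (hx : 0 ≤ x) : sinh x ≤ x * cosh x := by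
  have hmono : MonotoneOn (fun x => x * cosh x - sinh x) (Ici 0) := by
    refine monotoneOn_of_hasDerivWithinAt_nonneg (f' := fun x => x * sinh x) (convex_Ici 0)
      (by fun_prop) (fun y _ => ?_) (fun y hy => ?_)
    · exact (hasDerivAt_mul_cosh_sub_sinh y).hasDerivWithinAt
    · rw [interior_Ici] at hy
      exact mul_nonneg hy.le (sinh_nonneg_iff.2 hy.le)
  simpa using hmono self_mem_Ici hx hx

theorem mul_cosh_le {x : ℝ} (hx : 0 ≤ x) : x * cosh x ≤ (1 + x ^ 2 / 2) * sinh x := by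
  have hmono : MonotoneOn (fun x => (1 + x ^ 2 / 2) * sinh x - x * cosh x) (Ici 0) := by
    refine monotoneOn_of_hasDerivWithinAt_nonneg (f' := fun x => x ^ 2 / 2 * cosh x)
      (convex_Ici 0) (by fun_prop) (fun y _ => ?_) (fun y _ => by positivity)
    have hderiv : HasDerivAt (fun x => (1 + x ^ 2 / 2) * sinh x - x * cosh x)
        (y ^ 2 / 2 * cosh y) y :=
      (((((hasDerivAt_pow 2 y).div_const 2).const_add 1).mul (hasDerivAt_sinh y)).sub
        ((hasDerivAt_id' y).mul (hasDerivAt_cosh y))).congr_deriv (by ring)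
    exact hderiv.hasDerivWithinAt
  simpa using hmono self_mem_Ici hx hx

end Real

-- junk value `0` at `t = 0`; only used for `t > 0`
noncomputable def sinhc (t : ℝ) : ℝ := sinh t / t

theorem hasDerivAt_sinhc {t : ℝ} (ht : t ≠ 0) :
    HasDerivAt sinhc ((t * cosh t - sinh t) / t ^ 2) t :=
  ((hasDerivAt_sinh t).div (hasDerivAt_id' t) ht).congr_deriv (by ring)

theorem hasDerivAt_deriv_sinhc {t : ℝ} (ht : t ≠ 0) :
    HasDerivAt (fun t => (t * cosh t - sinh t) / t ^ 2)
      ((t ^ 2 * sinh t - 2 * t * cosh t + 2 * sinh t) / t ^ 3) t :=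
  ((hasDerivAt_mul_cosh_sub_sinh t).div (hasDerivAt_pow 2 t) (pow_ne_zero 2 ht)).congr_deriv
    (by field_simp; ring)

theorem monotoneOn_sinhc : MonotoneOn sinhc (Ioi 0) := by
  refine monotoneOn_of_hasDerivWithinAt_nonneg (f' := fun t => (t * cosh t - sinh t) / t ^ 2)
    (convex_Ioi 0) (fun t ht => (hasDerivAt_sinhc (ne_of_gt ht)).continuousAt.continuousWithinAt)
    (fun t ht => ?_) (fun t ht => ?_)
  all_goals rw [interior_Ioi, mem_Ioi] at ht
  · exact (hasDerivAt_sinhc (ne_of_gt ht)).hasDerivWithinAt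
  · exact div_nonneg (sub_nonneg.2 (sinh_le_mul_cosh ht.le)) (by positivity)

theorem convexOn_sinhc : ConvexOn ℝ (Ioi 0) sinhc := by
  refine convexOn_of_hasDerivWithinAt2_nonneg (f' := fun t => (t * cosh t - sinh t) / t ^ 2)
    (f'' := fun t => (t ^ 2 * sinh t - 2 * t * cosh t + 2 * sinh t) / t ^ 3) (convex_Ioi 0)
    (fun t ht => (hasDerivAt_sinhc (ne_of_gt ht)).continuousAt.continuousWithinAt)
    (fun t ht => ?_) (fun t ht => ?_) (fun t ht => ?_)
  all_goals rw [interior_Ioi, mem_Ioi] at ht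
  · exact (hasDerivAt_sinhc (ne_of_gt ht)).hasDerivWithinAt
  · exact (hasDerivAt_deriv_sinhc (ne_of_gt ht)).hasDerivWithinAt
  · have := mul_cosh_le ht.le
    exact div_nonneg (by nlinarith) (by positivity)

theorem hasDerivAt_log_one_sub_div_self {q : ℝ} (hq : q ∈ Ioo 0 1) :
    HasDerivAt (fun q => log ((1 - q) / q)) (-1 / (q * (1 - q))) q := by
  have h1q : 1 - q ≠ 0 := by linarith [hq.2]
  have hdiv : HasDerivAt (fun q => (1 - q) / q) (-1 / q ^ 2) q :=
    (((hasDerivAt_id' q).const_sub 1).div (hasDerivAt_id' q) hq.1.ne').congr_deriv (by ring)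
  exact (hdiv.log (div_ne_zero h1q hq.1.ne')).congr_deriv (by field_simp)

theorem hasDerivAt_neg_one_div_mul_one_sub {q : ℝ} (hq : q ∈ Ioo 0 1) :
    HasDerivAt (fun q => -1 / (q * (1 - q))) ((1 - 2 * q) / (q * (1 - q)) ^ 2) q := by
  have hprod : q * (1 - q) ≠ 0 := mul_ne_zero hq.1.ne' (by linarith [hq.2])
  have hprod' : HasDerivAt (fun q => q * (1 - q)) (1 - 2 * q) q :=
    ((hasDerivAt_id' q).mul ((hasDerivAt_id' q).const_sub 1)).congr_deriv (by ring)
  exact ((hasDerivAt_const q (-1 : ℝ)).div hprod' hprod).congr_deriv (by ring)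

theorem convexOn_log_one_sub_div_self :
    ConvexOn ℝ (Ioo 0 (1 / 2)) (fun q => log ((1 - q) / q)) := by
  have hsub : Ioo (0 : ℝ) (1 / 2) ⊆ Ioo 0 1 := Ioo_subset_Ioo_right (by norm_num)
  refine convexOn_of_hasDerivWithinAt2_nonneg (f' := fun q => -1 / (q * (1 - q)))
    (f'' := fun q => (1 - 2 * q) / (q * (1 - q)) ^ 2) (convex_Ioo 0 (1 / 2))
    (fun q hq => (hasDerivAt_log_one_sub_div_self (hsub hq)).continuousAt.continuousWithinAt)
    (fun q hq => ?_) (fun q hq => ?_) (fun q hq => ?_)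
  all_goals simp only [interior_Ioo] at hq ⊢
  · exact (hasDerivAt_log_one_sub_div_self (hsub hq)).hasDerivWithinAt
  · exact (hasDerivAt_neg_one_div_mul_one_sub (hsub hq)).hasDerivWithinAt
  · exact div_nonneg (by linarith [hq.2]) (sq_nonneg _)

theorem log_one_sub_div_self_pos {q : ℝ} (hq : q ∈ Ioo 0 (1 / 2)) : 0 < log ((1 - q) / q) :=
  log_pos ((one_lt_div hq.1).2 (by linarith [hq.2]))

theorem sinh_log_one_sub_div_self {q : ℝ} (hq : q ∈ Ioo 0 1) :
    sinh (log ((1 - q) / q)) = (1 - 2 * q) / (2 * q * (1 - q)) := by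
  have h1q : 1 - q ≠ 0 := by linarith [hq.2]
  rw [sinh_log (div_pos (by linarith [hq.2]) hq.1), inv_div]
  field_simp
  ring

theorem pstar_eq_lineMap (p x : ℝ) : pstar p x = AffineMap.lineMap x (1 - x) p := by
  rw [AffineMap.lineMap_apply_ring, pstar]
  ring

theorem pstar_mem_Ioo {p x : ℝ} (hp : p ∈ Ico 0 (1 / 2)) (hx : x ∈ Ioo 0 (1 / 2)) :
    pstar p x ∈ Ioo 0 (1 / 2) := by
  obtain ⟨hp0, hp⟩ := hp
  obtain ⟨hx0, hx⟩ := hx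
  constructor <;> simp only [pstar] <;> nlinarith

theorem lfun_eq_mul_sinhc {x p : ℝ} (hx : x ≠ 1 / 2) (hq : pstar p x ∈ Ioo 0 1) :
    lfun x p = 2 * log 2 / (1 - 2 * x) * sinhc (log ((1 - pstar p x) / pstar p x)) := by
  have hq1 : 1 - pstar p x ≠ 0 := by linarith [hq.2]
  have hx2 : 1 - 2 * x ≠ 0 := by contrapose! hx; linarith
  have hlog2 : log 2 ≠ 0 := by positivity
  have hstar : 1 - 2 * pstar p x = (1 - 2 * x) * (1 - 2 * p) := by rw [pstar]; ring
  rw [lfun, sinhc, sinh_log_one_sub_div_self hq, logb, hstar]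
  field_simp

/-- For fixed `x̄ ∈ (0, 1/2)`, the function `l` is convex on `[0, 1/2)`. -/
theorem stmt4 (xb : ℝ) (hx : xb ∈ Set.Ioo (0 : ℝ) (1 / 2)) :
    ConvexOn ℝ (Set.Ico (0 : ℝ) (1 / 2)) (lfun xb) := by
  have hmaps : MapsTo (pstar · xb) (Ico 0 (1 / 2)) (Ioo 0 (1 / 2)) :=
    fun p hp => pstar_mem_Ioo hp hx
  have hlog : ConvexOn ℝ (Ico 0 (1 / 2)) (fun p => log ((1 - pstar p xb) / pstar p xb)) := by
    have hline : (pstar · xb) = AffineMap.lineMap xb (1 - xb) := funext (pstar_eq_lineMap · xb)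
    have := convexOn_log_one_sub_div_self.comp_affineMap (AffineMap.lineMap xb (1 - xb))
    rw [← hline] at this
    exact this.subset hmaps (convex_Ico 0 (1 / 2))
  have hsinhc := convexOn_sinhc.comp_of_mapsTo hlog monotoneOn_sinhc
    fun p hp => log_one_sub_div_self_pos (hmaps hp)
  have hcoeff : 0 ≤ 2 * log 2 / (1 - 2 * xb) := div_nonneg (by positivity) (by linarith [hx.2])
  refine (hsinhc.smul hcoeff).congr fun p hp => ?_
  rw [lfun_eq_mul_sinhc hx.2.ne (Ioo_subset_Ioo_right (by norm_num) (hmaps hp))]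
  rfl
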